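/- For every probability distribution p on [n] and every real B > 1, there exists a partition of [n] into at most 4B + 1 consecutive intervals such that: (a) every element i ∈ [n] with p(i) > 1/B forms a singleton interval of the partition, and (b) every interval of the partition that is not such a singleton has probability mass p(I) ≤ 3/(2B). -/

import Mathlib

/-!
Greedy construction from left to right: a heavy element (mass `> 1/B`) becomes a singleton
block; otherwise take the longest run of light elements of mass `≤ 3/(2B)`. A run stopped by a
light element has mass `> 3/(2B) - 1/B = 1/(2B)`, and a run stopped by a heavy element is paid
for, together with that element's singleton, by its mass `> 1/B`. So the blocks other than the
last carry on average mass more than `1/(2B)`, and there are at most `2B + 1 ≤ 4B + 1` of them.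
-/

open Finset

theorem Fin.exists_castSucc_le_lt_succ {α : Type*} [LinearOrder α] :
    ∀ {K : ℕ} (e : Fin (K + 1) → α) {x : α}, e 0 ≤ x → x < e (Fin.last K) →
      ∃ ℓ : Fin K, e ℓ.castSucc ≤ x ∧ x < e ℓ.succ
  | 0, _, _, h0, hlast => absurd hlast (not_lt.2 h0)
  | K + 1, e, x, h0, hlast => by
    by_cases hx : x < e (Fin.last K).castSucc
    · obtain ⟨ℓ, hℓ⟩ := exists_castSucc_le_lt_succ (e ∘ Fin.castSucc) h0 hx
      exact ⟨ℓ.castSucc, by rw [Fin.succ_castSucc]; exact hℓ⟩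
    · exact ⟨Fin.last K, not_lt.1 hx, by rwa [Fin.succ_last]⟩

structure IntervalPartition (a b : ℕ) where
  K : ℕ
  e : Fin (K + 1) → ℕ
  strictMono : StrictMono e
  e_zero : e 0 = a
  e_last : e (Fin.last K) = b

namespace IntervalPartition

variable {a b s : ℕ}

def block (P : IntervalPartition a b) (ℓ : Fin P.K) : Finset ℕ :=
  Ico (P.e ℓ.castSucc) (P.e ℓ.succ)

def nil (b : ℕ) : IntervalPartition b b :=
  ⟨0, ![b], strictMono_vecEmpty, rfl, rfl⟩

def cons (P : IntervalPartition a b) (h : s < a) : IntervalPartition s b where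
  K := P.K + 1
  e := Fin.cons s P.e
  strictMono := P.strictMono.vecCons (by rwa [P.e_zero])
  e_zero := rfl
  e_last := by rw [← Fin.succ_last, Fin.cons_succ, P.e_last]

theorem block_cons_zero (P : IntervalPartition a b) (h : s < a) :
    (P.cons h).block (0 : Fin (P.K + 1)) = Ico s a := by
  simp [block, cons, ← P.e_zero]

theorem block_cons_succ (P : IntervalPartition a b) (h : s < a) (ℓ : Fin P.K) :
    (P.cons h).block ℓ.succ = P.block ℓ := by
  simp [block, cons]

theorem forall_block_cons {q : Finset ℕ → Prop} (P : IntervalPartition a b) (h : s < a) :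
    (∀ ℓ, q ((P.cons h).block ℓ)) ↔ q (Ico s a) ∧ ∀ ℓ, q (P.block ℓ) := by
  change (∀ ℓ : Fin (P.K + 1), _) ↔ _
  simp only [Fin.forall_fin_succ, block_cons_zero, block_cons_succ]

theorem exists_mem_block (P : IntervalPartition a b) {i : ℕ} (hi : i ∈ Ico a b) :
    ∃ ℓ, i ∈ P.block ℓ := by
  obtain ⟨h0, h1⟩ := mem_Ico.1 hi
  simpa [block] using
    Fin.exists_castSucc_le_lt_succ P.e (by rwa [P.e_zero]) (by rwa [P.e_last])

end IntervalPartition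

def IsEquitableBlock (p : ℕ → ℝ) (B : ℝ) (I : Finset ℕ) : Prop :=
  (∀ i ∈ I, 1 / B < p i → I = {i}) ∧
    ((¬ ∃ i, I = {i} ∧ 1 / B < p i) → ∑ i ∈ I, p i ≤ 3 / (2 * B))

section Equitable

variable {p : ℕ → ℝ} {B : ℝ}

theorem isEquitableBlock_singleton {i : ℕ} (hi : 1 / B < p i) : IsEquitableBlock p B {i} :=
  ⟨fun j hj _ => by rw [mem_singleton.1 hj], fun h => absurd ⟨i, rfl, hi⟩ h⟩

theorem isEquitableBlock_of_light {I : Finset ℕ} (hlight : ∀ i ∈ I, p i ≤ 1 / B)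
    (hsum : ∑ i ∈ I, p i ≤ 3 / (2 * B)) : IsEquitableBlock p B I :=
  ⟨fun i hi hpi => absurd (hlight i hi) (not_le.2 hpi), fun _ => hsum⟩

theorem exists_maximal_light_block (hB : 0 < B) {s m : ℕ} (hsm : s < m) (hps : p s ≤ 1 / B) :
    ∃ t, s < t ∧ t ≤ m ∧ (∀ i ∈ Ico s t, p i ≤ 1 / B) ∧ ∑ i ∈ Ico s t, p i ≤ 3 / (2 * B) ∧
      (t < m → 1 / B < p t ∨ 1 < 2 * B * ∑ i ∈ Ico s t, p i) := by
  classical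
  let Q t := (∀ i ∈ Ico s t, p i ≤ 1 / B) ∧ ∑ i ∈ Ico s t, p i ≤ 3 / (2 * B)
  have hQs : Q (s + 1) := by
    have : 1 / B ≤ 3 / (2 * B) := by rw [div_le_div_iff₀ hB (by positivity)]; linarith
    refine ⟨fun i hi => ?_, ?_⟩ <;> simp_all [Nat.Ico_succ_singleton]
    linarith
  let t := Nat.findGreatest Q m
  have hst : s + 1 ≤ t := Nat.le_findGreatest hsm hQs
  obtain ⟨hlight, hsum⟩ : Q t := Nat.findGreatest_spec hsm hQs
  refine ⟨t, hst, Nat.findGreatest_le m, hlight, hsum, fun htm => ?_⟩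
  have hnot : ¬ Q (t + 1) := Nat.findGreatest_is_greatest (Nat.lt_succ_self t) htm
  by_contra! h
  refine hnot ⟨fun i hi => ?_, ?_⟩
  · rcases eq_or_ne i t with rfl | hit
    · exact h.1
    · exact hlight i (by rw [mem_Ico] at hi ⊢; omega)
  · have hrun : ∑ i ∈ Ico s t, p i ≤ 1 / (2 * B) := (le_div_iff₀' (by positivity)).2 h.2
    have hthird : 1 / (2 * B) + 1 / B = 3 / (2 * B) := by field_simp; ring
    rw [sum_Ico_succ_top (by omega)]
    linarith [h.1]

theorem exists_intervalPartition_isEquitableBlock (hB : 0 < B) {m : ℕ} (s : ℕ) (hsm : s ≤ m)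
    (hp : ∀ i ∈ Ico s m, 0 ≤ p i) :
    ∃ P : IntervalPartition s m, (∀ ℓ, IsEquitableBlock p B (P.block ℓ)) ∧
      (P.K : ℝ) ≤ 2 * B * ∑ i ∈ Ico s m, p i + 1 := by
  rcases hsm.eq_or_lt with rfl | hsm
  · exact ⟨.nil s, fun ℓ => ℓ.elim0, by simp [IntervalPartition.nil]⟩
  have hmass : ∀ t ≤ m, 0 ≤ ∑ i ∈ Ico s t, p i := fun t ht =>
    sum_nonneg fun i hi => hp i (Ico_subset_Ico_right ht hi)
  have hp' : ∀ u ≥ s, ∀ i ∈ Ico u m, 0 ≤ p i := fun u hu i hi =>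
    hp i (Ico_subset_Ico_left hu hi)
  by_cases hs : 1 / B < p s
  · obtain ⟨P, hP, hK⟩ := exists_intervalPartition_isEquitableBlock hB (s + 1) hsm
      (hp' _ s.le_succ)
    refine ⟨P.cons s.lt_succ_self, (P.forall_block_cons _).2
      ⟨by simpa using isEquitableBlock_singleton hs, hP⟩, ?_⟩
    have : 1 < p s * B := (div_lt_iff₀ hB).1 hs
    rw [sum_eq_sum_Ico_succ_bot hsm]
    push_cast [IntervalPartition.cons]
    nlinarith
  obtain ⟨t, hst, htm, hlight, hsum, hmax⟩ := exists_maximal_light_block hB hsm (not_lt.1 hs)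
  have hblock := isEquitableBlock_of_light hlight hsum
  rcases eq_or_lt_of_le htm with rfl | htm
  · refine ⟨(IntervalPartition.nil t).cons hst, (IntervalPartition.forall_block_cons _ _).2
      ⟨hblock, fun ℓ => ℓ.elim0⟩, ?_⟩
    have := mul_nonneg (by positivity : (0 : ℝ) ≤ 2 * B) (hmass t le_rfl)
    push_cast [IntervalPartition.cons, IntervalPartition.nil]
    linarith
  rw [← sum_Ico_consecutive p hst.le htm.le]
  by_cases ht : 1 / B < p t
  -- the run `[s, t)` may be arbitrarily light, so it is emitted together with `{t}`
  · obtain ⟨P, hP, hK⟩ := exists_intervalPartition_isEquitableBlock hB (t + 1) htm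
      (hp' _ (by omega))
    refine ⟨(P.cons t.lt_succ_self).cons hst, ?_, ?_⟩
    · simp only [IntervalPartition.forall_block_cons]
      exact ⟨hblock, by simpa using isEquitableBlock_singleton ht, hP⟩
    · have : 1 < p t * B := (div_lt_iff₀ hB).1 ht
      rw [sum_eq_sum_Ico_succ_bot htm]
      push_cast [IntervalPartition.cons]
      nlinarith [hmass t htm.le]
  · obtain ⟨P, hP, hK⟩ := exists_intervalPartition_isEquitableBlock hB t htm.le
      (hp' t hst.le)
    refine ⟨P.cons hst, (P.forall_block_cons _).2 ⟨hblock, hP⟩, ?_⟩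
    have := (hmax htm).resolve_left ht
    push_cast [IntervalPartition.cons]
    nlinarith
termination_by m - s

end Equitable

theorem exists_equitable_partition_general
    (n : ℕ) (p : ℕ → ℝ)
    (hp0 : ∀ i ∈ Finset.Icc 1 n, 0 ≤ p i) (hp1 : ∑ i ∈ Finset.Icc 1 n, p i = 1)
    (B : ℝ) (hB : 1 < B) :
    ∃ (K : ℕ) (e : Fin (K + 1) → ℕ),
      StrictMono e ∧ e 0 = 1 ∧ e (Fin.last K) = n + 1 ∧
      (K : ℝ) ≤ 4 * B + 1 ∧
      (∀ i ∈ Finset.Icc 1 n, 1 / B < p i →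
        ∃ ℓ : Fin K, Finset.Ico (e ℓ.castSucc) (e ℓ.succ) = {i}) ∧
      (∀ ℓ : Fin K,
        (¬ ∃ i, Finset.Ico (e ℓ.castSucc) (e ℓ.succ) = {i} ∧ 1 / B < p i) →
        (∑ i ∈ Finset.Ico (e ℓ.castSucc) (e ℓ.succ), p i) ≤ 3 / (2 * B)) := by
  have hB0 : 0 < B := zero_lt_one.trans hB
  have hIcc : Ico 1 (n + 1) = Icc 1 n := Ico_add_one_right_eq_Icc 1 n
  obtain ⟨P, hP, hK⟩ :=
    exists_intervalPartition_isEquitableBlock hB0 1 (by omega : 1 ≤ n + 1) (by rwa [hIcc])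
  rw [hIcc, hp1] at hK
  refine ⟨P.K, P.e, P.strictMono, P.e_zero, P.e_last, by linarith, fun i hi hpi => ?_,
    fun ℓ => (hP ℓ).2⟩
  obtain ⟨ℓ, hℓ⟩ := P.exists_mem_block (hIcc ▸ hi)
  exact ⟨ℓ, (hP ℓ).1 i hℓ hpi⟩

/-- For every probability distribution `p` on `[n] = {1, …, n}` and
every real `B > 1`, there is a partition of `[n]` into `K ≤ 4B + 1` consecutive
intervals (given by breakpoints `1 = e 0 < e 1 < ⋯ < e K = n + 1`) such that every
element of mass greater than `1/B` forms a singleton interval of the partition, and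
every interval that is not such a heavy singleton has mass at most `3/(2B)`. -/
theorem exists_equitable_partition
    (n : ℕ) (hn : 0 < n) (p : ℕ → ℝ)
    (hp0 : ∀ i ∈ Finset.Icc 1 n, 0 ≤ p i) (hp1 : ∑ i ∈ Finset.Icc 1 n, p i = 1)
    (B : ℝ) (hB : 1 < B) :
    ∃ (K : ℕ) (e : Fin (K + 1) → ℕ),
      StrictMono e ∧ e 0 = 1 ∧ e (Fin.last K) = n + 1 ∧
      (K : ℝ) ≤ 4 * B + 1 ∧
      (∀ i ∈ Finset.Icc 1 n, 1 / B < p i →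
        ∃ ℓ : Fin K, Finset.Ico (e ℓ.castSucc) (e ℓ.succ) = {i}) ∧
      (∀ ℓ : Fin K,
        (¬ ∃ i, Finset.Ico (e ℓ.castSucc) (e ℓ.succ) = {i} ∧ 1 / B < p i) →
        (∑ i ∈ Finset.Ico (e ℓ.castSucc) (e ℓ.succ), p i) ≤ 3 / (2 * B)) :=
  exists_equitable_partition_general n p hp0 hp1 B hB
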